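/- (Frauchiger-Renner paradox, concrete quantum form.) Let ψ be the Hardy state and define the quantum joint probabilities q₁ = ‖(|ok⟩⟨ok|_{RA} ⊗ |0⟩⟨0|_S ⊗ I_B) ψ‖², q₂ = ‖(I_R ⊗ |0⟩⟨0|_A ⊗ |1⟩⟨1|_S ⊗ I_B) ψ‖², q₃ = ‖(I_R ⊗ |1⟩⟨1|_A ⊗ |ok⟩⟨ok|_{SB}) ψ‖², q₄ = |⟨ok_{RA} ⊗ ok_{SB}, ψ⟩|². Then there is no probability mass function p on {0,1}⁴ with coordinates (a, b, u, w) such that p(u=1, b=0) = q₁, p(b=1, a=0) = q₂, p(a=1, w=1) = q₃, and p(u=1, w=1) = q₄; indeed q₁ = q₂ = q₃ = 0 while q₄ = 1/12 > 0, which is jointly unrealizable by any distribution. -/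

import Mathlib

/-! The Hardy state is chosen so that three of the four projections annihilate it: its `S = 0`
branch is `|fail⟩_{RA} |0⟩_S |0⟩_B`, its `S = 1` branch has `A = 1`, and its `A = 1` branch is
`|1⟩_R |1⟩_A |fail⟩_{SB}`, while `|fail⟩ ⊥ |ok⟩`. Nevertheless `⟨ok ⊗ ok, ψ⟩ = 1/(2√3)`.
Classically, `u = w = 1` forces one of `u ∧ ¬b`, `b ∧ ¬a`, `a ∧ w`, so by the union bound a
distribution giving these three events probability zero gives `u ∧ w` probability zero too. -/

open scoped ComplexInnerProductSpace
open Finset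

noncomputable section

abbrev Qubit := EuclideanSpace ℂ (Fin 2)
abbrev TwoQubit := EuclideanSpace ℂ (Fin 2 × Fin 2)
abbrev FourQubit := EuclideanSpace ℂ (Fin 2 × Fin 2 × Fin 2 × Fin 2)

/-- standard basis vectors |0⟩, |1⟩ of ℂ² -/
def ket (i : Fin 2) : Qubit := EuclideanSpace.single i 1

/-- tensor product of two qubit states -/
def tp2 (v w : Qubit) : TwoQubit := WithLp.toLp 2 (fun p => v p.1 * w p.2)

/-- tensor product of four qubit states, registers (R, A, S, B) -/
def tp4 (v w x y : Qubit) : FourQubit :=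
  WithLp.toLp 2 (fun p => v p.1 * w p.2.1 * x p.2.2.1 * y p.2.2.2)

/-- a two-qubit state in registers R,A tensored with a two-qubit state in registers S,B -/
def tpPair (v w : TwoQubit) : FourQubit :=
  WithLp.toLp 2 (fun p => v (p.1, p.2.1) * w (p.2.2.1, p.2.2.2))

/-- |ok⟩ = (|00⟩ − |11⟩)/√2 -/
def okv : TwoQubit := ((Real.sqrt 2 : ℂ))⁻¹ • (tp2 (ket 0) (ket 0) - tp2 (ket 1) (ket 1))

/-- the Hardy state ψ = (1/√3)(|0000⟩ + |1100⟩ + |1111⟩) -/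
def hardy : FourQubit :=
  ((Real.sqrt 3 : ℂ))⁻¹ •
    (tp4 (ket 0) (ket 0) (ket 0) (ket 0) + tp4 (ket 1) (ket 1) (ket 0) (ket 0) +
      tp4 (ket 1) (ket 1) (ket 1) (ket 1))

/-- the operator |v⟩⟨v|_{RA} ⊗ |u⟩⟨u|_S ⊗ I_B applied to a four-qubit state -/
def projRA_S (v : TwoQubit) (u : Qubit) (x : FourQubit) : FourQubit :=
  WithLp.toLp 2 (fun p => v (p.1, p.2.1) * u p.2.2.1 *
    ∑ r : Fin 2, ∑ a : Fin 2, ∑ s : Fin 2,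
      (starRingEnd ℂ) (v (r, a)) * (starRingEnd ℂ) (u s) * x (r, a, s, p.2.2.2))

/-- the operator I_R ⊗ |u⟩⟨u|_A ⊗ |v⟩⟨v|_S ⊗ I_B applied to a four-qubit state -/
def projA_S (u v : Qubit) (x : FourQubit) : FourQubit :=
  WithLp.toLp 2 (fun p => u p.2.1 * v p.2.2.1 *
    ∑ a : Fin 2, ∑ s : Fin 2,
      (starRingEnd ℂ) (u a) * (starRingEnd ℂ) (v s) * x (p.1, a, s, p.2.2.2))

/-- the operator I_R ⊗ |u⟩⟨u|_A ⊗ |v⟩⟨v|_{SB} applied to a four-qubit state -/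
def projA_SB (u : Qubit) (v : TwoQubit) (x : FourQubit) : FourQubit :=
  WithLp.toLp 2 (fun p => u p.2.1 * v (p.2.2.1, p.2.2.2) *
    ∑ a : Fin 2, ∑ s : Fin 2, ∑ b : Fin 2,
      (starRingEnd ℂ) (u a) * (starRingEnd ℂ) (v (s, b)) * x (p.1, a, s, b))

def q₁ : ℝ := ‖projRA_S okv (ket 0) hardy‖ ^ 2
def q₂ : ℝ := ‖projA_S (ket 0) (ket 1) hardy‖ ^ 2
def q₃ : ℝ := ‖projA_SB (ket 1) okv hardy‖ ^ 2
def q₄ : ℝ := ‖⟪tpPair okv okv, hardy⟫‖ ^ 2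

lemma ket_apply (i j : Fin 2) : ket i j = if j = i then 1 else 0 := by
  simp [ket]

lemma okv_apply (r a : Fin 2) :
    okv (r, a) = (Real.sqrt 2 : ℂ)⁻¹ * if r = a then (if r = 0 then 1 else -1) else 0 := by
  fin_cases r <;> fin_cases a <;> simp [okv, tp2, ket_apply]

lemma hardy_apply (r a s b : Fin 2) :
    hardy (r, a, s, b) = (Real.sqrt 3 : ℂ)⁻¹ * if r = a ∧ s = b ∧ s ≤ r then 1 else 0 := by
  fin_cases r <;> fin_cases a <;> fin_cases s <;> fin_cases b <;> simp [hardy, tp4, ket_apply]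

lemma projRA_S_okv_ket_zero_hardy : projRA_S okv (ket 0) hardy = 0 := by
  ext ⟨r, a, s, b⟩
  fin_cases b <;> simp [projRA_S, okv_apply, hardy_apply, ket_apply, Fin.sum_univ_two]

lemma projA_S_ket_zero_ket_one_hardy : projA_S (ket 0) (ket 1) hardy = 0 := by
  ext ⟨r, a, s, b⟩
  fin_cases r <;> simp [projA_S, hardy_apply, ket_apply, Fin.sum_univ_two]

lemma projA_SB_ket_one_okv_hardy : projA_SB (ket 1) okv hardy = 0 := by
  ext ⟨r, a, s, b⟩
  fin_cases r <;> simp [projA_SB, okv_apply, hardy_apply, ket_apply, Fin.sum_univ_two]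

lemma inner_tpPair_okv_okv_hardy :
    ⟪tpPair okv okv, hardy⟫ = ((2 * Real.sqrt 3 : ℝ) : ℂ)⁻¹ := by
  have hsqrt2 : (Real.sqrt 2 : ℂ)⁻¹ * (Real.sqrt 2 : ℂ)⁻¹ = 2⁻¹ := by
    rw [← mul_inv, ← Complex.ofReal_mul, Real.mul_self_sqrt zero_le_two]; norm_num
  simp [inner, tpPair, okv_apply, hardy_apply, Fin.sum_univ_two, Fintype.sum_prod_type, hsqrt2,
    map_ofNat]

lemma q₁_eq_zero : q₁ = 0 := by simp [q₁, projRA_S_okv_ket_zero_hardy]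

lemma q₂_eq_zero : q₂ = 0 := by simp [q₂, projA_S_ket_zero_ket_one_hardy]

lemma q₃_eq_zero : q₃ = 0 := by simp [q₃, projA_SB_ket_one_okv_hardy]

lemma q₄_eq : q₄ = 1 / 12 := by
  rw [q₄, inner_tpPair_okv_okv_hardy, norm_inv, Complex.norm_real, Real.norm_eq_abs,
    abs_of_nonneg (by positivity), inv_pow, mul_pow, Real.sq_sqrt zero_le_three]
  norm_num

lemma sum_filter_le_add_add {ι M : Type*} [Fintype ι] [AddCommMonoid M] [PartialOrder M]
    [IsOrderedAddMonoid M] {p : ι → M} (hp : 0 ≤ p) {E F G H : ι → Prop} [DecidablePred E]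
    [DecidablePred F] [DecidablePred G] [DecidablePred H] (h : ∀ x, E x → F x ∨ G x ∨ H x) :
    ∑ x ∈ univ.filter E, p x ≤
      ∑ x ∈ univ.filter F, p x + ∑ x ∈ univ.filter G, p x + ∑ x ∈ univ.filter H, p x := by
  simp only [sum_filter, ← sum_add_distrib]
  refine sum_le_sum fun x _ => ?_
  have hpx := hp x
  have hx := h x
  split_ifs <;> simp_all [add_nonneg, le_add_of_nonneg_left]

lemma hardy_union_bound {M : Type*} [AddCommMonoid M] [PartialOrder M] [IsOrderedAddMonoid M]
    {p : Bool × Bool × Bool × Bool → M} (hp : 0 ≤ p) :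
    ∑ x ∈ univ.filter (fun x : Bool × Bool × Bool × Bool =>
        x.2.2.1 = true ∧ x.2.2.2 = true), p x ≤
      ∑ x ∈ univ.filter (fun x : Bool × Bool × Bool × Bool =>
          x.2.2.1 = true ∧ x.2.1 = false), p x +
        ∑ x ∈ univ.filter (fun x : Bool × Bool × Bool × Bool =>
          x.2.1 = true ∧ x.1 = false), p x +
        ∑ x ∈ univ.filter (fun x : Bool × Bool × Bool × Bool =>
          x.1 = true ∧ x.2.2.2 = true), p x :=
  sum_filter_le_add_add hp fun ⟨a, b, _, _⟩ => by cases a <;> cases b <;> simp_all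

theorem frauchiger_renner_paradox :
    (q₁ = 0 ∧ q₂ = 0 ∧ q₃ = 0 ∧ q₄ = 1 / 12) ∧
    ¬ ∃ p : Bool × Bool × Bool × Bool → ℝ,
      (∀ x, 0 ≤ p x) ∧ (∑ x, p x = 1) ∧
      (∑ x ∈ univ.filter (fun x : Bool × Bool × Bool × Bool =>
          x.2.2.1 = true ∧ x.2.1 = false), p x) = q₁ ∧
      (∑ x ∈ univ.filter (fun x : Bool × Bool × Bool × Bool =>
          x.2.1 = true ∧ x.1 = false), p x) = q₂ ∧
      (∑ x ∈ univ.filter (fun x : Bool × Bool × Bool × Bool =>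
          x.1 = true ∧ x.2.2.2 = true), p x) = q₃ ∧
      (∑ x ∈ univ.filter (fun x : Bool × Bool × Bool × Bool =>
          x.2.2.1 = true ∧ x.2.2.2 = true), p x) = q₄ := by
  refine ⟨⟨q₁_eq_zero, q₂_eq_zero, q₃_eq_zero, q₄_eq⟩, ?_⟩
  rintro ⟨p, hp, -, h₁, h₂, h₃, h₄⟩
  have := hardy_union_bound (p := p) hp
  rw [h₁, h₂, h₃, h₄, q₁_eq_zero, q₂_eq_zero, q₃_eq_zero, q₄_eq] at this
  norm_num at this

end
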